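/- Let (X,d,μ) be a Q-doubling metric measure space with Q > 1, let ε > 0, let u : X → ℝ be integrable on balls and let g ≥ 0 be Borel measurable with g ∈ L^Q(X,μ), such that the pair (u,g) satisfies the Q-Poincaré inequality with constants C and λ. Let x ∈ X and suppose there exist c > 0 and r_0 > 0 such that ∫_{B(x,r)} g^Q dμ ≤ c (log(1/r))^{−Q−ε} for all 0 < r < r_0. Then the sequence (u_{B(x,2^{−j})})_{j∈ℕ} of integral averages of u over the balls B(x,2^{−j}) is a Cauchy sequence; in particular lim_{r→0} ⨍_{B(x,r)} u dμ exists. -/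

import Mathlib

open MeasureTheory Metric Set Filter Topology ENNReal

noncomputable section

/-- Every (open) ball has positive and finite measure. -/
def BallsPosFinite {X : Type*} [MetricSpace X] [MeasurableSpace X]
    (μ : Measure X) : Prop :=
  ∀ (x : X) (r : ℝ), 0 < r → 0 < μ (ball x r) ∧ μ (ball x r) < ⊤

/-- `μ` is doubling with constant `Cμ`. -/
def DoublingWith {X : Type*} [MetricSpace X] [MeasurableSpace X]
    (μ : Measure X) (Cμ : ℝ≥0∞) : Prop :=
  ∀ (x : X) (r : ℝ), 0 < r → μ (ball x (2 * r)) ≤ Cμ * μ (ball x r)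

/-- `μ` is a doubling measure. -/
def Doubling {X : Type*} [MetricSpace X] [MeasurableSpace X]
    (μ : Measure X) : Prop :=
  ∃ Cμ : ℝ≥0∞, 1 ≤ Cμ ∧ Cμ < ⊤ ∧ DoublingWith μ Cμ

/-- Relative lower volume decay with exponent `Q` and constant `C`:
`(s/r)^Q ≤ C · μ(B(x,s))/μ(B(a,r))` whenever `x ∈ B(a,r)` and `0 < s ≤ r`. -/
def LowerVolume {X : Type*} [MetricSpace X] [MeasurableSpace X]
    (μ : Measure X) (Q C : ℝ) : Prop :=
  ∀ (a x : X) (r s : ℝ), x ∈ ball a r → 0 < s → s ≤ r →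
    ENNReal.ofReal ((s / r) ^ Q) ≤ ENNReal.ofReal C * (μ (ball x s) / μ (ball a r))

/-- `(X,d,μ)` is `Q`-doubling: `μ` is doubling and the relative lower volume
decay `(s/r)^Q ≤ C μ(B(x,s))/μ(B(a,r))` holds for some constant `C ≥ 1`. -/
def QDoubling {X : Type*} [MetricSpace X] [MeasurableSpace X]
    (μ : Measure X) (Q : ℝ) : Prop :=
  Doubling μ ∧ ∃ C : ℝ, 1 ≤ C ∧ LowerVolume μ Q C

/-- The pair `(u,g)` satisfies the `p`-Poincaré inequality with constants `C` and `lam`: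
for every ball `B`, `⨍_B |u - u_B| dμ ≤ C diam(B) (⨍_{lam B} g^p dμ)^{1/p}`. -/
def PoincarePair {X : Type*} [MetricSpace X] [MeasurableSpace X]
    (μ : Measure X) (u g : X → ℝ) (p C lam : ℝ) : Prop :=
  ∀ (x : X) (r : ℝ), 0 < r →
    ⨍ y in ball x r, |u y - ⨍ z in ball x r, u z ∂μ| ∂μ ≤
      C * diam (ball x r) * (⨍ y in ball x (lam * r), g y ^ p ∂μ) ^ (1 / p)

/-- A chain of balls `B_i = B(c i, s i)` associated with the point `x` and
radius `r`, with parameters `lam, M, m`. -/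
def IsBallChain {X : Type*} [MetricSpace X] (lam M m : ℝ) (x : X) (r : ℝ)
    (c : ℕ → X) (s : ℕ → ℝ) : Prop :=
  (∀ i, 0 < s i) ∧
  -- (1) `B_0 ⊆ X \ B(x,r)`
  ball (c 0) (s 0) ⊆ (ball x r)ᶜ ∧
  -- (2) `M⁻¹ diam(B_i) ≤ dist(x,B_i) ≤ M diam(B_i)`
  (∀ i, M⁻¹ * diam (ball (c i) (s i)) ≤ infDist x (ball (c i) (s i)) ∧
      infDist x (ball (c i) (s i)) ≤ M * diam (ball (c i) (s i))) ∧
  -- (3) `dist(x,B_i) ≤ M r 2^{-m i}`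
  (∀ i : ℕ, infDist x (ball (c i) (s i)) ≤ M * r * (2 : ℝ) ^ (-(m * i))) ∧
  -- (4) there is a ball `D_i ⊆ B_i ∩ B_{i+1}` with `B_i ∪ B_{i+1} ⊆ M D_i`
  (∀ i : ℕ, ∃ (y : X) (t : ℝ), 0 < t ∧
      ball y t ⊆ ball (c i) (s i) ∩ ball (c (i + 1)) (s (i + 1)) ∧
      ball (c i) (s i) ∪ ball (c (i + 1)) (s (i + 1)) ⊆ ball y (M * t)) ∧
  -- (5) no point of `X` belongs to more than `M` balls `lam B_i`
  (∀ y : X, {i : ℕ | y ∈ ball (c i) (lam * s i)}.Finite ∧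
      ({i : ℕ | y ∈ ball (c i) (lam * s i)}.ncard : ℝ) ≤ M)

/-- `X` satisfies the chain condition: for every `lam ≥ 1` there are constants
`M ≥ 1`, `0 < m ≤ 1` such that for each `x ∈ X` and all `0 < r < diam(X)/8`
there is a chain of balls associated with `x, r`. -/
def ChainCondition (X : Type*) [MetricSpace X] : Prop :=
  ∀ lam : ℝ, 1 ≤ lam → ∃ M m : ℝ, 1 ≤ M ∧ 0 < m ∧ m ≤ 1 ∧
    ∀ (x : X) (r : ℝ), 0 < r →
      ENNReal.ofReal r < EMetric.diam (Set.univ : Set X) / 8 →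
      ∃ (c : ℕ → X) (s : ℕ → ℝ), IsBallChain lam M m x r c s

/-- The gauge function `h(t) = (log(1/t))^p` (as a function on `ℝ≥0∞`). -/
def hGauge (p : ℝ) : ℝ≥0∞ → ℝ≥0∞ :=
  fun t => ENNReal.ofReal (Real.log (1 / t.toReal) ^ p)

/-- The generalized Hausdorff measure with gauge function `h(t) = (log(1/t))^p`. -/
def hausdorffH {X : Type*} [MetricSpace X] [MeasurableSpace X] [BorelSpace X]
    (p : ℝ) : Measure X :=
  Measure.mkMetric (hGauge p)

/-
At scale `s` the Poincaré inequality and the lower volume bound `μ(B(x,ρ)) ≳ ρ^Q` combine into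
the scale-invariant estimate `⨍_{B(x,s)} |u - u_B| ≲ (∫_{B(x,λs)} g^Q)^{1/Q}`, which the decay
hypothesis turns into `O(log(1/s)^{-(Q+ε)/Q})`. By doubling, `u_{B(x,r)}` and `u_{B(x,s)}` differ
by at most that much when `s/2 ≤ r ≤ s`; at `s = 2^{-j}` this is `O(j^{-(Q+ε)/Q})`, summable since
`(Q+ε)/Q > 1`.
-/

section Averages

variable {α : Type*} [MeasurableSpace α] {μ : Measure α}

def meanOscillation (μ : Measure α) (u : α → ℝ) (s : Set α) : ℝ :=
  ⨍ y in s, |u y - ⨍ z in s, u z ∂μ| ∂μ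

lemma meanOscillation_nonneg (u : α → ℝ) (s : Set α) : 0 ≤ meanOscillation μ u s := by
  rw [meanOscillation, setAverage_eq]
  exact smul_nonneg (by positivity) (integral_nonneg fun _ => abs_nonneg _)

lemma abs_setAverage_sub_setAverage_le {u : α → ℝ} {s t : Set α} (hst : s ⊆ t) (hs : μ s ≠ 0)
    (ht : μ t ≠ ∞) (hu : IntegrableOn u t μ) :
    |⨍ y in s, u y ∂μ - ⨍ y in t, u y ∂μ| ≤ μ.real t / μ.real s * meanOscillation μ u t := by
  set m := ⨍ y in t, u y ∂μ
  have hs_fin : μ s ≠ ∞ := ne_top_of_le_ne_top ht (measure_mono hst)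
  have hs_pos : 0 < μ.real s := ENNReal.toReal_pos hs hs_fin
  have ht_pos : 0 < μ.real t :=
    ENNReal.toReal_pos (fun h => hs (measure_mono_null hst h)) ht
  have hshift : ⨍ y in s, u y ∂μ - m = (μ.real s)⁻¹ * ∫ y in s, (u y - m) ∂μ := by
    rw [integral_sub (hu.mono_set hst) (integrableOn_const hs_fin), setIntegral_const,
      setAverage_eq, smul_eq_mul, smul_eq_mul, mul_sub, inv_mul_cancel_left₀ hs_pos.ne']
  calc |⨍ y in s, u y ∂μ - m| ≤ (μ.real s)⁻¹ * ∫ y in s, |u y - m| ∂μ := by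
        rw [hshift, abs_mul, abs_of_pos (inv_pos.2 hs_pos)]
        gcongr
        exact abs_integral_le_integral_abs
    _ ≤ (μ.real s)⁻¹ * ∫ y in t, |u y - m| ∂μ :=
        mul_le_mul_of_nonneg_left (setIntegral_mono_set (hu.sub (integrableOn_const ht)).abs
          (Eventually.of_forall fun _ => abs_nonneg _) hst.eventuallyLE) (by positivity)
    _ = μ.real t / μ.real s * ((μ.real t)⁻¹ * ∫ y in t, |u y - m| ∂μ) := by
        field_simp
    _ = μ.real t / μ.real s * meanOscillation μ u t := by
        rw [meanOscillation, setAverage_eq, smul_eq_mul]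

end Averages

section Balls

variable {X : Type*} [MetricSpace X] [MeasurableSpace X] {μ : Measure X}

lemma BallsPosFinite.measureReal_pos (hballs : BallsPosFinite μ) (x : X) {r : ℝ} (hr : 0 < r) :
    0 < μ.real (ball x r) :=
  ENNReal.toReal_pos (hballs x r hr).1.ne' (hballs x r hr).2.ne

lemma abs_setAverage_ball_sub_le_of_doubling {Cμ : ℝ≥0∞} (hballs : BallsPosFinite μ)
    (hdoub : DoublingWith μ Cμ) (hCμ : Cμ ≠ ∞) {u : X → ℝ} {x : X} {r s : ℝ}
    (hu : IntegrableOn u (ball x s) μ) (hr : 0 < r) (hrs : r ≤ s) (hs : s ≤ 2 * r) :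
    |⨍ y in ball x r, u y ∂μ - ⨍ y in ball x s, u y ∂μ| ≤
      Cμ.toReal * meanOscillation μ u (ball x s) := by
  have hratio : μ.real (ball x s) / μ.real (ball x r) ≤ Cμ.toReal := by
    rw [div_le_iff₀ (hballs.measureReal_pos x hr), measureReal_def, measureReal_def,
      ← ENNReal.toReal_mul]
    exact ENNReal.toReal_mono (ENNReal.mul_ne_top hCμ (hballs x r hr).2.ne)
      ((measure_mono (ball_subset_ball hs)).trans (hdoub x r hr))
  calc _ ≤ μ.real (ball x s) / μ.real (ball x r) * meanOscillation μ u (ball x s) :=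
        abs_setAverage_sub_setAverage_le (ball_subset_ball hrs) (hballs x r hr).1.ne'
          (hballs x s (hr.trans_le hrs)).2.ne hu
    _ ≤ Cμ.toReal * meanOscillation μ u (ball x s) :=
        mul_le_mul_of_nonneg_right hratio (meanOscillation_nonneg u _)

lemma LowerVolume.rpow_le_mul_measureReal_ball {Q C₂ : ℝ} (hLV : LowerVolume μ Q C₂)
    (hC₂ : 0 ≤ C₂) (hballs : BallsPosFinite μ) (x : X) {R : ℝ} (hR : 0 < R) :
    ∃ K, ∀ ρ, 0 < ρ → ρ ≤ R → ρ ^ Q ≤ K * μ.real (ball x ρ) := by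
  refine ⟨C₂ * R ^ Q / μ.real (ball x R), fun ρ hρ hρR => ?_⟩
  have hR_pos := hballs.measureReal_pos x hR
  have hvol : (ρ / R) ^ Q ≤ C₂ * (μ.real (ball x ρ) / μ.real (ball x R)) := by
    have h := ENNReal.toReal_mono (ENNReal.mul_ne_top ENNReal.ofReal_ne_top
      (ENNReal.div_ne_top (hballs x ρ hρ).2.ne (hballs x R hR).1.ne'))
      (hLV x x R ρ (mem_ball_self hR) hρ hρR)
    rwa [ENNReal.toReal_mul, ENNReal.toReal_div, ENNReal.toReal_ofReal hC₂,
      ENNReal.toReal_ofReal (by positivity)] at h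
  rw [Real.div_rpow hρ.le hR.le, div_le_iff₀ (by positivity)] at hvol
  calc ρ ^ Q ≤ C₂ * (μ.real (ball x ρ) / μ.real (ball x R)) * R ^ Q := hvol
    _ = C₂ * R ^ Q / μ.real (ball x R) * μ.real (ball x ρ) := by ring

lemma PoincarePair.meanOscillation_ball_le {u g : X → ℝ} {Q C lam C₂ : ℝ}
    (hPI : PoincarePair μ u g Q C lam) (hLV : LowerVolume μ Q C₂) (hC₂ : 0 ≤ C₂)
    (hballs : BallsPosFinite μ) (hQ : 0 < Q) (hC : 0 ≤ C) (hlam : 0 < lam) (hg : ∀ y, 0 ≤ g y)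
    (x : X) {R : ℝ} (hR : 0 < R) :
    ∃ K, 0 ≤ K ∧ ∀ s, 0 < s → lam * s ≤ R →
      meanOscillation μ u (ball x s) ≤ K * (∫ y in ball x (lam * s), g y ^ Q ∂μ) ^ (1 / Q) := by
  obtain ⟨K₀, hK₀⟩ := hLV.rpow_le_mul_measureReal_ball hC₂ hballs x hR
  have hK₀_nonneg : 0 ≤ K₀ := (pos_of_mul_pos_left ((Real.rpow_pos_of_pos hR Q).trans_le
    (hK₀ R hR le_rfl)) measureReal_nonneg).le
  refine ⟨2 * C * K₀ ^ (1 / Q) / lam, by positivity, fun s hs hsR => ?_⟩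
  set ρ := lam * s
  have hρ : 0 < ρ := mul_pos hlam hs
  set I := ∫ y in ball x ρ, g y ^ Q ∂μ
  have hI : 0 ≤ I := integral_nonneg fun y => Real.rpow_nonneg (hg y) Q
  have havg_nonneg : 0 ≤ ⨍ y in ball x ρ, g y ^ Q ∂μ := by
    rw [setAverage_eq]; exact smul_nonneg (by positivity) hI
  have havg : ⨍ y in ball x ρ, g y ^ Q ∂μ ≤ K₀ / ρ ^ Q * I := by
    rw [setAverage_eq, smul_eq_mul]
    refine mul_le_mul_of_nonneg_right ?_ hI
    rw [inv_eq_one_div, div_le_div_iff₀ (hballs.measureReal_pos x hρ) (by positivity)]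
    linarith [hK₀ ρ hρ hsR]
  have havg_root : (⨍ y in ball x ρ, g y ^ Q ∂μ) ^ (1 / Q) ≤ K₀ ^ (1 / Q) / ρ * I ^ (1 / Q) := by
    refine (Real.rpow_le_rpow havg_nonneg havg (by positivity)).trans_eq ?_
    rw [Real.mul_rpow (by positivity) hI, Real.div_rpow hK₀_nonneg (by positivity), one_div,
      Real.rpow_rpow_inv hρ.le hQ.ne']
  calc meanOscillation μ u (ball x s)
      ≤ C * diam (ball x s) * (⨍ y in ball x ρ, g y ^ Q ∂μ) ^ (1 / Q) := hPI x s hs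
    _ ≤ C * (2 * s) * (K₀ ^ (1 / Q) / ρ * I ^ (1 / Q)) := by
        gcongr
        exact diam_ball hs.le
    _ = 2 * C * K₀ ^ (1 / Q) / lam * I ^ (1 / Q) := by
        simp only [ρ]
        field_simp

end Balls

lemma eventually_mul_lt_nhdsGT_zero (lam : ℝ) {r : ℝ} (hr : 0 < r) :
    ∀ᶠ s in 𝓝[>] 0, lam * s < r := by
  refine Tendsto.eventually_lt_const hr (tendsto_nhdsWithin_of_tendsto_nhds ?_)
  simpa using (continuous_const_mul lam).tendsto 0

lemma eventually_rpow_le_of_log_decay {G : ℝ → ℝ} {Q a c r₀ lam : ℝ} (hQ : 0 < Q) (ha : a ≤ 0)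
    (hc : 0 ≤ c) (hr₀ : 0 < r₀) (hlam : 0 < lam) (hG : ∀ ρ, 0 ≤ G ρ)
    (hdecay : ∀ ρ, 0 < ρ → ρ < r₀ → G ρ ≤ c * Real.log (1 / ρ) ^ a) :
    ∀ᶠ s in 𝓝[>] 0, G (lam * s) ^ (1 / Q) ≤ c ^ (1 / Q) * (Real.log (1 / s) / 2) ^ (a / Q) := by
  have hlog : Tendsto (fun s : ℝ => Real.log (1 / s)) (𝓝[>] 0) atTop := by
    simpa [Real.log_inv] using Real.tendsto_log_nhdsGT_zero
  filter_upwards [self_mem_nhdsWithin, eventually_mul_lt_nhdsGT_zero lam hr₀,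
    hlog.eventually_gt_atTop 0, hlog.eventually_ge_atTop (2 * Real.log lam)]
    with s (hs : 0 < s) hsr₀ hL hL_lam
  have hlog_lam : Real.log (1 / s) / 2 ≤ Real.log (1 / (lam * s)) := by
    rw [one_div, one_div, Real.log_inv, Real.log_inv, Real.log_mul hlam.ne' hs.ne']
    rw [one_div, Real.log_inv] at hL_lam
    linarith
  have hG_le : G (lam * s) ≤ c * (Real.log (1 / s) / 2) ^ a :=
    (hdecay _ (mul_pos hlam hs) hsr₀).trans
      (mul_le_mul_of_nonneg_left (Real.rpow_le_rpow_of_nonpos (by positivity) hlog_lam ha) hc)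
  calc G (lam * s) ^ (1 / Q) ≤ (c * (Real.log (1 / s) / 2) ^ a) ^ (1 / Q) :=
        Real.rpow_le_rpow (hG _) hG_le (by positivity)
    _ = c ^ (1 / Q) * (Real.log (1 / s) / 2) ^ (a / Q) := by
        rw [Real.mul_rpow hc (by positivity), ← Real.rpow_mul (by positivity), mul_one_div]

lemma summable_log_dyadic_rpow {a : ℝ} (ha : a < -1) :
    Summable fun j : ℕ => (Real.log (1 / (1 / 2 : ℝ) ^ j) / 2) ^ a := by
  have hlog : ∀ j : ℕ, Real.log (1 / (1 / 2 : ℝ) ^ j) / 2 = j * (Real.log 2 / 2) := by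
    intro j
    simp only [one_div, inv_pow, div_inv_eq_mul, one_mul, Real.log_pow]
    ring
  simp_rw [hlog, Real.mul_rpow (Nat.cast_nonneg _) (by positivity : (0 : ℝ) ≤ Real.log 2 / 2)]
  exact (Real.summable_nat_rpow.2 ha).mul_right _

lemma cauchySeq_dyadic_and_tendsto_of_dist_le {E : Type*} [PseudoMetricSpace E] [CompleteSpace E]
    {f : ℝ → E} {ψ : ℝ → ℝ} (hf : ∀ᶠ s in 𝓝[>] 0, ∀ r ∈ Icc (s / 2) s, dist (f r) (f s) ≤ ψ s)
    (hψ : Summable fun j : ℕ => ψ ((1 / 2) ^ j)) :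
    CauchySeq (fun j : ℕ => f ((1 / 2) ^ j)) ∧ ∃ L, Tendsto f (𝓝[>] 0) (𝓝 L) := by
  obtain ⟨N, hN⟩ := eventually_atTop.1 ((tendsto_pow_atTop_nhdsWithin_zero_of_lt_one
    (by norm_num : (0 : ℝ) < 1 / 2) (by norm_num)).eventually hf)
  have hcauchy : CauchySeq (fun j : ℕ => f ((1 / 2) ^ j)) := by
    refine (cauchySeq_shift N).1 (cauchySeq_of_dist_le_of_summable _ (fun n => ?_)
      ((summable_nat_add_iff N).2 hψ))
    rw [dist_comm, Nat.succ_add]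
    refine hN (n + N) (by omega) _ ⟨le_of_eq ?_, pow_le_pow_of_le_one (by norm_num) (by norm_num)
      (Nat.le_succ _)⟩
    rw [pow_succ]
    ring
  obtain ⟨L, hL⟩ := cauchySeq_tendsto_of_complete hcauchy
  refine ⟨hcauchy, L, Metric.tendsto_nhdsWithin_nhds.2 fun η hη => ?_⟩
  obtain ⟨J, hJ⟩ := eventually_atTop.1 ((eventually_ge_atTop N).and
    ((hψ.tendsto_atTop_zero.eventually_lt_const (half_pos hη)).and
      (hL.eventually (ball_mem_nhds L (half_pos hη)))))
  refine ⟨(1 / 2) ^ J, by positivity, fun r (hr : 0 < r) hrJ => ?_⟩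
  rw [Real.dist_eq, sub_zero, abs_of_pos hr] at hrJ
  obtain ⟨n, hn_lt, hn_le⟩ := exists_nat_pow_near_of_lt_one hr
    (hrJ.le.trans (pow_le_one₀ (by norm_num) (by norm_num))) (by norm_num : (0 : ℝ) < 1 / 2)
    (by norm_num)
  have hJn : J ≤ n := Nat.lt_succ_iff.1
    ((pow_lt_pow_iff_right_of_lt_one₀ (by norm_num) (by norm_num)).1 (hn_lt.trans hrJ))
  obtain ⟨hNn, hψn, hLn⟩ := hJ n hJn
  have hr_near : r ∈ Icc ((1 / 2) ^ n / 2) ((1 / 2) ^ n) :=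
    ⟨le_of_eq_of_le (by rw [pow_succ]; ring) hn_lt.le, hn_le⟩
  calc dist (f r) L ≤ dist (f r) (f ((1 / 2) ^ n)) + dist (f ((1 / 2) ^ n)) L :=
        dist_triangle _ _ _
    _ < η / 2 + η / 2 := add_lt_add_of_le_of_lt ((hN n hNn r hr_near).trans hψn.le) hLn
    _ = η := add_halves η

theorem averages_cauchy_of_log_decay_general
    {X : Type*} [MetricSpace X] [MeasurableSpace X]
    (μ : Measure X) (hballs : BallsPosFinite μ)
    (Q : ℝ) (hQ : 1 < Q) (hQdoub : QDoubling μ Q)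
    (ε : ℝ) (hε : 0 < ε)
    (u g : X → ℝ)
    (hu : ∀ (x : X) (r : ℝ), 0 < r → IntegrableOn u (ball x r) μ)
    (hg0 : ∀ x, 0 ≤ g x)
    (C lam : ℝ) (hC : 0 < C) (hlam : 1 ≤ lam)
    (hPI : PoincarePair μ u g Q C lam)
    (x : X) (c r₀ : ℝ) (hc : 0 < c) (hr₀ : 0 < r₀)
    (hdecay : ∀ r : ℝ, 0 < r → r < r₀ →
      ∫ y in ball x r, g y ^ Q ∂μ ≤ c * Real.log (1 / r) ^ (-Q - ε)) :
    CauchySeq (fun j : ℕ => ⨍ y in ball x ((1 / 2 : ℝ) ^ j), u y ∂μ) ∧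
    ∃ L : ℝ, Tendsto (fun r : ℝ => ⨍ y in ball x r, u y ∂μ) (𝓝[>] 0) (𝓝 L) := by
  obtain ⟨⟨Cμ, -, hCμ, hdoub⟩, C₂, hC₂, hLV⟩ := hQdoub
  have hQ_pos : 0 < Q := by linarith
  have hlam_pos : 0 < lam := by linarith
  obtain ⟨K, hK, hosc⟩ :=
    hPI.meanOscillation_ball_le hLV (by linarith) hballs hQ_pos hC.le hlam_pos hg0 x one_pos
  have hdecay_root := eventually_rpow_le_of_log_decay hQ_pos (by linarith) hc.le hr₀ hlam_pos
    (fun ρ => integral_nonneg fun y => Real.rpow_nonneg (hg0 y) Q) hdecay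
  refine cauchySeq_dyadic_and_tendsto_of_dist_le (f := fun r => ⨍ y in ball x r, u y ∂μ)
    (ψ := fun s => Cμ.toReal * (K * (c ^ (1 / Q) * (Real.log (1 / s) / 2) ^ ((-Q - ε) / Q))))
    ?_ ?_
  · filter_upwards [self_mem_nhdsWithin, eventually_mul_lt_nhdsGT_zero lam one_pos,
      hdecay_root] with s (hs : 0 < s) hs_scale hs_root r hr
    rw [Real.dist_eq]
    calc _ ≤ Cμ.toReal * meanOscillation μ u (ball x s) :=
          abs_setAverage_ball_sub_le_of_doubling hballs hdoub hCμ.ne (hu x s hs)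
            (by linarith [hr.1]) hr.2 (by linarith [hr.1])
      _ ≤ _ := by
          gcongr
          exact (hosc s hs hs_scale.le).trans (by gcongr)
  · refine ((summable_log_dyadic_rpow ?_).mul_left _).mul_left _ |>.mul_left _
    rw [div_lt_iff₀ hQ_pos]
    linarith

/-- In a `Q`-doubling space, if `(u,g)` satisfies the `Q`-Poincaré inequality with
`g ∈ L^Q`, and at the point `x` one has `∫_{B(x,r)} g^Q dμ ≤ c log^{-Q-ε}(1/r)` for all
sufficiently small `r`, then the sequence of averages `u_{B(x,2^{-j})}` is Cauchy; in
particular the limit of averages `⨍_{B(x,r)} u dμ` as `r → 0` exists. -/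
theorem averages_cauchy_of_log_decay
    {X : Type*} [MetricSpace X] [MeasurableSpace X] [BorelSpace X]
    (μ : Measure X) (hballs : BallsPosFinite μ)
    (Q : ℝ) (hQ : 1 < Q) (hQdoub : QDoubling μ Q)
    (ε : ℝ) (hε : 0 < ε)
    (u g : X → ℝ)
    (hu : ∀ (x : X) (r : ℝ), 0 < r → IntegrableOn u (ball x r) μ)
    (hg0 : ∀ x, 0 ≤ g x) (hgm : Measurable g)
    (hgLQ : MemLp g (ENNReal.ofReal Q) μ)
    (C lam : ℝ) (hC : 0 < C) (hlam : 1 ≤ lam)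
    (hPI : PoincarePair μ u g Q C lam)
    (x : X) (c r₀ : ℝ) (hc : 0 < c) (hr₀ : 0 < r₀)
    (hdecay : ∀ r : ℝ, 0 < r → r < r₀ →
      ∫ y in ball x r, g y ^ Q ∂μ ≤ c * Real.log (1 / r) ^ (-Q - ε)) :
    CauchySeq (fun j : ℕ => ⨍ y in ball x ((1 / 2 : ℝ) ^ j), u y ∂μ) ∧
    ∃ L : ℝ, Tendsto (fun r : ℝ => ⨍ y in ball x r, u y ∂μ) (𝓝[>] 0) (𝓝 L) :=
  averages_cauchy_of_log_decay_general μ hballs Q hQ hQdoub ε hε u g hu hg0 C lam hC hlam hPI x c r₀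
    hc hr₀ hdecay
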